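/- The endomorphisms A and −A of ⋀^n(ℂ^{2n}) are not conjugate in GL(⋀^n(ℂ^{2n})): there is no invertible linear endomorphism P of ⋀^n(ℂ^{2n}) with P ∘ A ∘ P⁻¹ = −A. -/

import Mathlib

open Matrix

/-- The set of `n`-element subsets of `{1, …, 2n}` (realized as `Fin (2*n)`), indexing the
standard basis `e_I = e_{i₁} ∧ ⋯ ∧ e_{iₙ}` of the `n`-th exterior power `⋀ⁿ(ℂ^{2n})`. -/
abbrev Idx (n : ℕ) := {I : Finset (Fin (2 * n)) // I.card = n}

/-- The matrix of the induced linear map `⋀ⁿ(g)` on `⋀ⁿ(ℂ^{2n})` in the standard basis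
`{e_I}`: its `(I, J)` entry is the `n × n` minor of `g` with rows `I` and columns `J`
(both taken in increasing order), i.e. the coefficient of `e_I` in `⋀ⁿ(g)(e_J)`. -/
noncomputable def wedgePow (n : ℕ) (g : Matrix (Fin (2 * n)) (Fin (2 * n)) ℂ) :
    Matrix (Idx n) (Idx n) ℂ := fun I J =>
  Matrix.det (Matrix.of fun a b : Fin n =>
    g ((I.1.orderIsoOfFin I.2 a).1) ((J.1.orderIsoOfFin J.2 b).1))

/-- `qCoeff n I J = q(e_I, e_J)`, the coefficient of `e_1 ∧ ⋯ ∧ e_{2n}` in `e_I ∧ e_J`: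
it is `0` unless `J = Iᶜ`, in which case it is the sign `(-1)^{#{(i,j) ∈ I × J : i > j}}`
obtained by sorting the concatenation of the increasing enumerations of `I` and `J`. -/
noncomputable def qCoeff (n : ℕ) (I J : Idx n) : ℂ :=
  if (J : Finset (Fin (2 * n))) = (I : Finset (Fin (2 * n)))ᶜ then
    (-1 : ℂ) ^ (((I.1 ×ˢ J.1).filter fun p => p.2 < p.1).card)
  else 0

/-- The bilinear form `q` on `⋀ⁿ(ℂ^{2n})` defined by `v ∧ w = q(v, w) • e_1 ∧ ⋯ ∧ e_{2n}`,
written in coordinates with respect to the basis `{e_I}` (a vector of `⋀ⁿ(ℂ^{2n})` is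
recorded by its coordinate function `Idx n → ℂ`). -/
noncomputable def q (n : ℕ) (v w : Idx n → ℂ) : ℂ :=
  ∑ I : Idx n, ∑ J : Idx n, v I * w J * qCoeff n I J

/-- The basis vector `e_I` of `⋀ⁿ(ℂ^{2n})`, in coordinates. -/
noncomputable def eVec (n : ℕ) (I : Idx n) : Idx n → ℂ :=
  fun J => if J = I then 1 else 0

/-- The complement `Iᶜ` of an `n`-element subset of `{1, …, 2n}`. -/
def complIdx (n : ℕ) (I : Idx n) : Idx n :=
  ⟨(I : Finset (Fin (2 * n)))ᶜ, by
    rw [Finset.card_compl, I.2, Fintype.card_fin]; omega⟩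

/-- The matrix (in the basis `{e_I}`) of the linear map `S` on `⋀ⁿ(ℂ^{2n})` defined by
`S(e_I) = q(e_{Iᶜ}, e_I) • e_{Iᶜ}`. -/
noncomputable def Smat (n : ℕ) : Matrix (Idx n) (Idx n) ℂ := fun I J =>
  if I = complIdx n J then qCoeff n (complIdx n J) J else 0

/-- The `n × n` matrix `w_n` with entries `1` at positions `(i, n+1-i)` and `0` elsewhere. -/
noncomputable def wnMat (n : ℕ) : Matrix (Fin n) (Fin n) ℂ := fun i j =>
  if (i : ℕ) + (j : ℕ) + 1 = n then 1 else 0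

/-- The `2n × 2n` matrix `J_{2n}` with block form `[[0, wₙ], [-wₙ, 0]]`. -/
noncomputable def JMat (n : ℕ) : Matrix (Fin (2 * n)) (Fin (2 * n)) ℂ :=
  Matrix.reindex (finSumFinEquiv.trans (finCongr (by omega)))
    (finSumFinEquiv.trans (finCongr (by omega)))
    (Matrix.fromBlocks 0 (wnMat n) (-(wnMat n)) 0)

/-- The matrix of the endomorphism `A = S ∘ ⋀ⁿ(J_{2n})` of `⋀ⁿ(ℂ^{2n})`. -/
noncomputable def Amat (n : ℕ) : Matrix (Idx n) (Idx n) ℂ :=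
  Smat n * wedgePow n (JMat n)

/-!
Conjugate matrices have the same trace, so it suffices to show `tr A ≠ 0`. Since `S` maps
`e_{Iᶜ}` to a multiple of `e_I`, the diagonal entry `A_{II}` is `q(e_I, e_{Iᶜ})` times the
`(Iᶜ, I)`-minor of `J_{2n}`. The matrix `J_{2n}` pairs `k` with `2n + 1 - k` and has the entry
`ε_k = ±1` in row `k` (`ε_k = -1` iff `k > n`), so this minor vanishes unless `Iᶜ` is the
reflection of `I`, in which case it is `sgn(w_n) ∏_{k ∈ Iᶜ} ε_k`. For such `I` the inversions
between `I` and `Iᶜ` correspond to the pairs `(i, i') ∈ I × I` with `i + i' > 2n + 1`; swapping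
pairs off those with `i ≠ i'`, so `q(e_I, e_{Iᶜ}) = ∏_{i ∈ I} ε_i`. Hence every nonzero diagonal
entry equals `sgn(w_n) ∏_k ε_k`, and `I = {1, …, n}` gives one.
-/

open Finset

theorem Matrix.trace_eq_zero_of_conj_eq_neg {m R : Type*} [Fintype m] [DecidableEq m]
    [CommRing R] [NoZeroDivisors R] [NeZero (2 : R)] {A P : Matrix m m R} (hP : IsUnit P)
    (h : P * A * P⁻¹ = -A) : A.trace = 0 := by
  have h2 : 2 * A.trace = 0 := by
    have := trace_conj hP A
    rw [h, trace_neg] at this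
    linear_combination -this
  exact (mul_eq_zero.mp h2).resolve_left two_ne_zero

theorem Finset.neg_one_pow_card_filter_product_self {α R : Type*} [DecidableEq α] [CommRing R]
    (s : Finset α) {r : α → α → Prop} [DecidableRel r] (hr : ∀ a b, r a b → r b a) :
    (-1 : R) ^ #{p ∈ s ×ˢ s | r p.1 p.2} = (-1) ^ #{a ∈ s | r a a} := by
  set T := {p ∈ s ×ˢ s | r p.1 p.2}
  have hoff : ∏ p ∈ T with p.1 ≠ p.2, (-1 : R) = 1 :=
    prod_involution (fun p _ => p.swap) (fun _ _ => by norm_num)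
      (fun p hp _ h => (mem_filter.mp hp).2 (congrArg Prod.snd h))
      (fun p hp => by
        simp only [T, mem_filter, mem_product] at hp ⊢
        exact ⟨⟨⟨hp.1.1.2, hp.1.1.1⟩, hr _ _ hp.1.2⟩, Ne.symm hp.2⟩)
      (fun p _ => p.swap_swap)
  have hdiag : #{p ∈ T | p.1 = p.2} = #{a ∈ s | r a a} := by
    refine card_nbij' Prod.fst (fun a => (a, a)) ?_ ?_ ?_ ?_ <;>
      [rintro ⟨a, b⟩; intro a; rintro ⟨a, b⟩; intro a] <;> simp +contextual [T]
    rintro - - h rfl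
    exact h
  rw [prod_const] at hoff
  rw [← card_filter_add_card_filter_not (fun p : α × α => p.1 = p.2), pow_add, hoff, mul_one,
    hdiag]

section

variable {n : ℕ}

def halfSign (n : ℕ) (k : Fin (2 * n)) : ℂ := if (k : ℕ) < n then 1 else -1

theorem JMat_apply (a b : Fin (2 * n)) :
    JMat n a b = if b = a.rev then halfSign n a else 0 := by
  set e : Fin n ⊕ Fin n ≃ Fin (2 * n) := finSumFinEquiv.trans (finCongr (by omega))
  obtain ⟨x, rfl⟩ := e.surjective a
  obtain ⟨y, rfl⟩ := e.surjective b
  rw [JMat, reindex_apply, submatrix_apply, Equiv.symm_apply_apply, Equiv.symm_apply_apply]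
  rcases x with i | i <;> rcases y with j | j <;>
    simp [e, halfSign, wnMat, Fin.ext_iff, Fin.val_rev] <;> grind

/-- The span of the `e_i`, `i ∈ I`, is a Lagrangian subspace for the symplectic form `J_{2n}`,
which pairs `e_i` with `e_{rev i}`. -/
def IsLagrangian (I : Idx n) : Prop := (I.1)ᶜ = I.1.image Fin.rev

instance : DecidablePred (IsLagrangian (n := n)) :=
  fun I => inferInstanceAs (Decidable ((I.1)ᶜ = I.1.image Fin.rev))

theorem IsLagrangian.mem_compl_iff {I : Idx n} (hI : IsLagrangian I) (x : Fin (2 * n)) :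
    x ∈ (I.1)ᶜ ↔ x.rev ∈ I.1 := by
  rw [hI, mem_image]
  exact ⟨fun ⟨y, hy, hyx⟩ => hyx ▸ y.rev_rev.symm ▸ hy, fun h => ⟨x.rev, h, x.rev_rev⟩⟩

theorem exists_rev_mem_of_not_isLagrangian {I : Idx n} (hI : ¬ IsLagrangian I) :
    ∃ i ∈ I.1, i.rev ∈ I.1 := by
  by_contra! h
  refine hI (eq_of_subset_of_card_le (fun x hx => ?_) ?_).symm
  · obtain ⟨y, hy, rfl⟩ := mem_image.mp hx
    exact mem_compl.mpr (h y hy)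
  · rw [card_image_of_injective _ Fin.rev_injective, I.2]
    exact (complIdx n I).2.le

theorem exists_isLagrangian (n : ℕ) : ∃ I : Idx n, IsLagrangian I := by
  refine ⟨⟨({i | (i : ℕ) < n} : Finset (Fin (2 * n))), by rw [Fin.card_filter_val_lt]; omega⟩,
    ?_⟩
  ext x
  simp only [mem_compl, mem_filter, mem_univ, true_and, mem_image]
  constructor
  · intro hx
    exact ⟨x.rev, by rw [Fin.val_rev]; omega, x.rev_rev⟩
  · rintro ⟨y, hy, rfl⟩
    rw [Fin.val_rev]
    omega

@[simp]
theorem coe_complIdx (I : Idx n) : (complIdx n I).1 = (I.1)ᶜ := rfl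

theorem complIdx_complIdx (I : Idx n) : complIdx n (complIdx n I) = I :=
  Subtype.ext (compl_compl _)

theorem orderEmbOfFin_compl_of_isLagrangian {I : Idx n} (hI : IsLagrangian I) (a : Fin n) :
    (complIdx n I).1.orderEmbOfFin (complIdx n I).2 a = (I.1.orderEmbOfFin I.2 a.rev).rev := by
  refine (congrFun (orderEmbOfFin_unique (complIdx n I).2
    (f := fun a => (I.1.orderEmbOfFin I.2 a.rev).rev) (fun x => ?_) (fun x y hxy => ?_)) a).symm
  · rw [coe_complIdx, hI.mem_compl_iff, Fin.rev_rev]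
    exact orderEmbOfFin_mem _ _ _
  · exact Fin.rev_lt_rev.mpr ((I.1.orderEmbOfFin I.2).strictMono (Fin.rev_lt_rev.mpr hxy))

theorem wedgePow_JMat_apply_compl_of_not_isLagrangian {I : Idx n} (hI : ¬ IsLagrangian I) :
    wedgePow n (JMat n) (complIdx n I) I = 0 := by
  obtain ⟨i, hi, hrev⟩ := exists_rev_mem_of_not_isLagrangian hI
  obtain ⟨b, rfl⟩ : i ∈ Set.range (I.1.orderEmbOfFin I.2) := by rwa [range_orderEmbOfFin]
  refine det_eq_zero_of_column_eq_zero b fun a => ?_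
  have hc : (I.1)ᶜ.orderEmbOfFin (complIdx n I).2 a ∈ (I.1)ᶜ := orderEmbOfFin_mem _ _ _
  simp only [of_apply, coe_orderIsoOfFin_apply, JMat_apply]
  refine if_neg fun h => mem_compl.mp hc ?_
  rwa [h, Fin.rev_rev] at hrev

theorem wedgePow_JMat_apply_compl_of_isLagrangian {I : Idx n} (hI : IsLagrangian I) :
    wedgePow n (JMat n) (complIdx n I) I =
      Equiv.Perm.sign (Fin.revPerm (n := n)) * ∏ k ∈ (I.1)ᶜ, halfSign n k := by
  have hM : (of fun a b : Fin n => JMat n ((complIdx n I).1.orderIsoOfFin (complIdx n I).2 a)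
      (I.1.orderIsoOfFin I.2 b)) = (diagonal fun a =>
        halfSign n ((complIdx n I).1.orderEmbOfFin (complIdx n I).2 a)).submatrix id
          Fin.revPerm := by
    ext a b
    simp only [of_apply, coe_orderIsoOfFin_apply, JMat_apply, submatrix_apply, diagonal_apply,
      orderEmbOfFin_compl_of_isLagrangian hI, Fin.rev_rev, EmbeddingLike.apply_eq_iff_eq,
      Fin.revPerm_apply, id, eq_comm (a := b), Fin.rev_eq_iff]
  rw [wedgePow, hM, det_permute', det_diagonal]
  congr 1
  conv_rhs => rw [← map_orderEmbOfFin_univ (I.1)ᶜ (complIdx n I).2, prod_map]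
  rfl

theorem qCoeff_compl_of_isLagrangian {I : Idx n} (hI : IsLagrangian I) :
    qCoeff n I (complIdx n I) = ∏ i ∈ I.1, halfSign n i := by
  have hinv : #{p ∈ I.1 ×ˢ (complIdx n I).1 | p.2 < p.1} =
      #{p ∈ I.1 ×ˢ I.1 | p.2.rev < p.1} := by
    refine card_nbij' (fun p => (p.1, p.2.rev)) (fun p => (p.1, p.2.rev)) ?_ ?_ ?_ ?_ <;>
      rintro ⟨a, b⟩ <;> simp [hI.mem_compl_iff]
  have hdiag : {i ∈ I.1 | i.rev < i} = {i ∈ I.1 | ¬ i.val < n} :=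
    filter_congr fun i _ => by rw [Fin.lt_def, Fin.val_rev]; omega
  rw [qCoeff, if_pos (coe_complIdx I), hinv]
  refine (neg_one_pow_card_filter_product_self I.1 (r := fun a b => b.rev < a)
    fun a b => Fin.rev_lt_iff.mp).trans ?_
  rw [hdiag]
  simp only [halfSign, prod_ite, prod_const_one, prod_const, one_mul]

theorem Amat_apply_self (I : Idx n) :
    Amat n I I = qCoeff n I (complIdx n I) * wedgePow n (JMat n) (complIdx n I) I := by
  rw [Amat, mul_apply, sum_eq_single (complIdx n I)]
  · rw [Smat, if_pos (complIdx_complIdx I).symm, complIdx_complIdx]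
  · intro K _ hK
    rw [Smat, if_neg fun h => hK (by rw [h, complIdx_complIdx]), zero_mul]
  · exact fun h => absurd (mem_univ _) h

theorem Amat_apply_self_of_isLagrangian {I : Idx n} (hI : IsLagrangian I) :
    Amat n I I = Equiv.Perm.sign (Fin.revPerm (n := n)) * ∏ k, halfSign n k := by
  rw [Amat_apply_self, qCoeff_compl_of_isLagrangian hI,
    wedgePow_JMat_apply_compl_of_isLagrangian hI, mul_left_comm, prod_mul_prod_compl]

theorem Amat_apply_self_of_not_isLagrangian {I : Idx n} (hI : ¬ IsLagrangian I) :
    Amat n I I = 0 := by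
  rw [Amat_apply_self, wedgePow_JMat_apply_compl_of_not_isLagrangian hI, mul_zero]

theorem trace_Amat : (Amat n).trace =
    #{I : Idx n | IsLagrangian I} *
      (Equiv.Perm.sign (Fin.revPerm (n := n)) * ∏ k, halfSign n k) := by
  rw [trace, ← sum_filter_add_sum_filter_not univ IsLagrangian]
  simp only [diag_apply]
  rw [sum_congr rfl fun I hI => Amat_apply_self_of_isLagrangian (mem_filter.mp hI).2,
    sum_congr rfl fun I hI => Amat_apply_self_of_not_isLagrangian (mem_filter.mp hI).2,
    sum_const, sum_const_zero, add_zero, nsmul_eq_mul]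

theorem trace_Amat_ne_zero : (Amat n).trace ≠ 0 := by
  obtain ⟨I, hI⟩ := exists_isLagrangian n
  have hcard : #{I : Idx n | IsLagrangian I} ≠ 0 :=
    card_ne_zero_of_mem (mem_filter.mpr ⟨mem_univ I, hI⟩)
  have hsign : ((Equiv.Perm.sign (Fin.revPerm (n := n)) : ℤ) : ℂ) ≠ 0 :=
    Int.cast_ne_zero.mpr (Units.ne_zero _)
  have hhalf : ∏ k, halfSign n k ≠ 0 :=
    prod_ne_zero_iff.mpr fun k _ => by unfold halfSign; split_ifs <;> norm_num
  rw [trace_Amat]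
  exact mul_ne_zero (Nat.cast_ne_zero.mpr hcard) (mul_ne_zero hsign hhalf)

end

theorem Amat_not_conjugate_neg_general (n : ℕ) :
    ¬ ∃ P : Matrix (Idx n) (Idx n) ℂ, IsUnit P ∧ P * Amat n * P⁻¹ = -(Amat n) := by
  rintro ⟨P, hP, hconj⟩
  exact trace_Amat_ne_zero (Matrix.trace_eq_zero_of_conj_eq_neg hP hconj)

/-- The endomorphisms `A` and `-A` of `⋀ⁿ(ℂ^{2n})` are not conjugate: there is no
invertible linear endomorphism `P` with `P ∘ A ∘ P⁻¹ = -A`. -/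
theorem Amat_not_conjugate_neg (n : ℕ) (hn : 1 ≤ n) :
    ¬ ∃ P : Matrix (Idx n) (Idx n) ℂ, IsUnit P ∧ P * Amat n * P⁻¹ = -(Amat n) :=
  Amat_not_conjugate_neg_general n
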